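/- arXiv:math/9712209 — 2 statements merged into one kernel-verified Lean document; each statement's English description precedes it below -/
import Mathlib

section
/- For every positive integer n, Σ_{i=0}^{n−1} ((−1)^{n−i−1}/(2n−2i−1)) · (2n−i)_{2i}/(i!)^2 = 3^{n−1} · (∏_{i=1}^{n−1} (6i−1)(6i+1)) / ((2n−1)!!)^2, where the empty product (for n = 1) is 1 and (2n−1)!! = 1·3·5···(2n−1). -/
/-!
Let `summand n i` be the summand with the sign `(-1)^(n-i-1)` replaced by `(-1)^i`, so that the
left-hand side is `(-1)^(n-1) * S n` with `S n = ∑_{i<n} summand n i`. Zeilberger's algorithm yields a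
rational `certificate` such that, with `G n i = certificate n i * summand n i`,
`summand (n+1) i + ratio n * summand n i = G n i - G n (i+1)` for `i < n`. Since `summand` has
rational ratios in both indices, this reduces to an identity of rational functions. Summing over
`i < n` telescopes, and the extra term `summand (n+1) n` is exactly `G n n`, so
`S (n+1) = -ratio n * S n`. The right-hand side satisfies `closedForm (n+1) = ratio n * closedForm n`,
and both sides are `1` at `n = 1`.
-/

/-- Shifted factorial `(a)_k = a(a+1)···(a+k-1)`. -/
def shifted (a : ℚ) (k : ℕ) : ℚ := ∏ t ∈ Finset.range k, (a + t)

open Finset Nat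

lemma shifted_succ_right (a : ℚ) (k : ℕ) : shifted a (k + 1) = shifted a k * (a + k) :=
  prod_range_succ _ k

lemma shifted_succ_left (a : ℚ) (k : ℕ) : shifted a (k + 1) = a * shifted (a + 1) k := by
  rw [shifted, prod_range_succ']
  simp only [shifted, Nat.cast_zero, add_zero, Nat.cast_succ, add_assoc, add_comm (1 : ℚ), mul_comm]

lemma shifted_add_two_mul (a : ℚ) (k : ℕ) :
    shifted (a + 2) k * (a * (a + 1)) = shifted a k * ((a + k) * (a + k + 1)) := by
  have h := shifted_succ_left a (k + 1)
  rw [shifted_succ_left (a + 1), shifted_succ_right, shifted_succ_right, add_assoc a 1 1,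
    one_add_one_eq_two] at h
  push_cast at h
  linear_combination -h

lemma shifted_sub_one_add_two (a : ℚ) (k : ℕ) :
    shifted (a - 1) (k + 2) = (a - 1) * shifted a k * (a + k) := by
  rw [shifted_succ_left, sub_add_cancel, shifted_succ_right, mul_assoc]

lemma two_mul_sub_two_mul_sub_one_ne_zero (n i : ℕ) : (2 * n - 2 * i - 1 : ℚ) ≠ 0 := by
  intro h
  have : (2 * n - 2 * i - 1 : ℤ) = 0 := by exact_mod_cast h
  omega

def summand (n i : ℕ) : ℚ :=
  (-1) ^ i * shifted (2 * n - i) (2 * i) / ((2 * n - 2 * i - 1) * (i ! : ℚ) ^ 2)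

def ratio (n : ℚ) : ℚ := 3 * (6 * n - 1) * (6 * n + 1) / (2 * n + 1) ^ 2

def certificate (n i : ℚ) : ℚ :=
  i ^ 2 * ((224 * n ^ 4 + 96 * n ^ 3 - 44 * n ^ 2 - 24 * n - 3)
    + (-432 * n ^ 3 - 228 * n ^ 2 - 16 * n + 3) * i
    + (264 * n ^ 2 + 108 * n + 12) * i ^ 2 + (-56 * n - 12) * i ^ 3)
  / (n * (2 * n + 1) ^ 2 * (2 * n - i) * (2 * n + 1 - i) * (2 * n + 1 - 2 * i))

def closedForm (n : ℕ) : ℚ :=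
  3 ^ (n - 1) * (∏ i ∈ range (n - 1), (6 * ((i : ℚ) + 1) - 1) * (6 * ((i : ℚ) + 1) + 1)) /
    (∏ i ∈ range n, (2 * (i : ℚ) + 1)) ^ 2

lemma summand_mul_denom (n i : ℕ) :
    summand n i * ((2 * n - 2 * i - 1) * (i ! : ℚ) ^ 2) = (-1) ^ i * shifted (2 * n - i) (2 * i) :=
  div_mul_cancel₀ _ (mul_ne_zero (two_mul_sub_two_mul_sub_one_ne_zero n i) (by positivity))

lemma summand_succ_left (n i : ℕ) :
    summand (n + 1) i * ((2 * n - i) * (2 * n - i + 1) * (2 * n - 2 * i + 1)) =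
      summand n i * ((2 * n + i) * (2 * n + i + 1) * (2 * n - 2 * i - 1)) := by
  have h₁ := summand_mul_denom (n + 1) i
  have h₀ := summand_mul_denom n i
  have key := shifted_add_two_mul (2 * n - i) (2 * i)
  push_cast at h₁ key
  rw [show 2 * ((n : ℚ) + 1) - i = 2 * n - i + 2 by ring] at h₁
  refine mul_right_cancel₀ (pow_ne_zero 2 (cast_ne_zero.2 i.factorial_ne_zero)) ?_
  linear_combination ((2 * n - i) * (2 * n - i + 1)) * h₁
    - ((2 * n + i) * (2 * n + i + 1)) * h₀ + (-1) ^ i * key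

lemma summand_succ_right (n i : ℕ) :
    summand n (i + 1) * ((i + 1) ^ 2 * (2 * n - 2 * i - 3)) =
      -summand n i * ((2 * n - i - 1) * (2 * n + i) * (2 * n - 2 * i - 1)) := by
  have h₁ := summand_mul_denom n (i + 1)
  have h₀ := summand_mul_denom n i
  have key := shifted_sub_one_add_two (2 * n - i) (2 * i)
  rw [factorial_succ, show 2 * (i + 1) = 2 * i + 2 by ring] at h₁
  push_cast at h₁ key
  rw [show 2 * (n : ℚ) - (i + 1) = 2 * n - i - 1 by ring] at h₁
  refine mul_right_cancel₀ (pow_ne_zero 2 (cast_ne_zero.2 i.factorial_ne_zero)) ?_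
  linear_combination h₁ + ((2 * n - i - 1) * (2 * n + i)) * h₀ - (-1) ^ i * key

lemma ratio_add_eq_certificate {n i : ℚ} (hn : n ≠ 0) (h₁ : 2 * n + 1 ≠ 0)
    (h₂ : 2 * n - i ≠ 0) (h₃ : 2 * n - i + 1 ≠ 0) (h₄ : 2 * n - i - 1 ≠ 0)
    (h₅ : 2 * n - 2 * i + 1 ≠ 0) (h₆ : 2 * n - 2 * i - 1 ≠ 0) (h₇ : 2 * n - 2 * i - 3 ≠ 0)
    (h₈ : i + 1 ≠ 0) :
    (2 * n + i) * (2 * n + i + 1) * (2 * n - 2 * i - 1) /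
        ((2 * n - i) * (2 * n - i + 1) * (2 * n - 2 * i + 1)) + ratio n =
      certificate n i + certificate n (i + 1) *
        ((2 * n - i - 1) * (2 * n + i) * (2 * n - 2 * i - 1)) / ((i + 1) ^ 2 * (2 * n - 2 * i - 3)) := by
  -- the shapes in which `field_simp` meets these factors
  have : 2 * (n - i) + 1 ≠ 0 := by contrapose! h₅; linarith
  have : 2 * (n - i) - 3 ≠ 0 := by contrapose! h₇; linarith
  have : 2 * n + 1 - i ≠ 0 := by contrapose! h₃; linarith
  have : 2 * n + 1 - 2 * i ≠ 0 := by contrapose! h₅; linarith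
  have : 2 * n - (i + 1) ≠ 0 := by contrapose! h₄; linarith
  have : 2 * n + 1 - (i + 1) ≠ 0 := by contrapose! h₂; linarith
  have : 2 * n + 1 - 2 * (i + 1) ≠ 0 := by contrapose! h₆; linarith
  unfold ratio certificate
  field_simp
  ring

lemma certificate_self {n : ℕ} (hn : n ≠ 0) :
    certificate n n = -(3 * (3 * n + 1)) / (n + 1) := by
  have : (n : ℚ) ≠ 0 := cast_ne_zero.2 hn
  have : (n : ℚ) * 2 + 1 ≠ 0 := by positivity
  rw [certificate, show 2 * (n : ℚ) - n = n by ring, show 2 * (n : ℚ) + 1 - n = n + 1 by ring,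
    show 2 * (n : ℚ) + 1 - 2 * n = 1 by ring]
  field_simp
  ring

lemma summand_succ_add_ratio_mul {n i : ℕ} (hi : i < n) :
    summand (n + 1) i + ratio n * summand n i =
      certificate n i * summand n i - certificate n (i + 1) * summand n (i + 1) := by
  have hi' : (i : ℚ) + 1 ≤ n := by exact_mod_cast hi
  have hB : ((2 * n - i) * (2 * n - i + 1) * (2 * n - 2 * i + 1) : ℚ) ≠ 0 :=
    mul_ne_zero (mul_ne_zero (fun h ↦ by linarith) (fun h ↦ by linarith)) (fun h ↦ by linarith)
  have h₃ : (2 * n - 2 * i - 3 : ℚ) ≠ 0 := by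
    have := two_mul_sub_two_mul_sub_one_ne_zero n (i + 1)
    push_cast at this
    contrapose! this
    linarith
  have hD : ((i + 1) ^ 2 * (2 * n - 2 * i - 3) : ℚ) ≠ 0 := mul_ne_zero (by positivity) h₃
  have key := ratio_add_eq_certificate (n := n) (i := i) (fun h ↦ by linarith)
    (fun h ↦ by linarith) (fun h ↦ by linarith) (fun h ↦ by linarith) (fun h ↦ by linarith)
    (fun h ↦ by linarith) (fun h ↦ by linarith) h₃ (by positivity)
  rw [eq_div_of_mul_eq hB (summand_succ_left n i), eq_div_of_mul_eq hD (summand_succ_right n i)]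
  linear_combination summand n i * key

lemma summand_succ_self {n : ℕ} (hn : n ≠ 0) :
    summand (n + 1) n = certificate n n * summand n n := by
  have hn' : (n : ℚ) ≠ 0 := cast_ne_zero.2 hn
  have h := summand_succ_left n n
  rw [certificate_self hn, div_mul_eq_mul_div, eq_div_iff (by positivity)]
  refine mul_left_cancel₀ hn' ?_
  linear_combination h

lemma sum_summand_succ {n : ℕ} (hn : n ≠ 0) :
    ∑ i ∈ range (n + 1), summand (n + 1) i = -ratio n * ∑ i ∈ range n, summand n i := by
  set g : ℕ → ℚ := fun i ↦ certificate n i * summand n i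
  have step : ∀ i ∈ range n, summand (n + 1) i = (g i - g (i + 1)) - ratio n * summand n i := by
    intro i hi
    push_cast [g]
    linear_combination summand_succ_add_ratio_mul (mem_range.1 hi)
  have hg : g 0 = 0 := by simp [g, certificate]
  rw [sum_range_succ, sum_congr rfl step, sum_sub_distrib, sum_range_sub', hg, ← mul_sum,
    summand_succ_self hn]
  ring

lemma closedForm_succ {n : ℕ} (hn : n ≠ 0) : closedForm (n + 1) = ratio n * closedForm n := by
  obtain ⟨m, rfl⟩ := exists_eq_succ_of_ne_zero hn
  have : ∏ i ∈ range (m + 1), (2 * (i : ℚ) + 1) ≠ 0 := prod_ne_zero_iff.2 fun i _ ↦ by positivity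
  simp only [closedForm, ratio, add_tsub_cancel_right, succ_eq_add_one, prod_range_succ (n := m + 1),
    prod_range_succ (n := m), pow_succ]
  push_cast
  field_simp

lemma sum_summand_eq {n : ℕ} (hn : 1 ≤ n) :
    ∑ i ∈ range n, summand n i = (-1) ^ (n - 1) * closedForm n := by
  induction n, hn using le_induction with
  | base => norm_num [summand, closedForm, shifted]
  | succ n hn ih =>
    obtain ⟨m, rfl⟩ : ∃ m, n = m + 1 := ⟨n - 1, by omega⟩
    rw [sum_summand_succ (by omega), ih, closedForm_succ (n := m + 1) (by omega)]
    simp only [add_tsub_cancel_right, pow_succ]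
    ring

lemma neg_one_pow_sub_sub_one {n i : ℕ} (hi : i < n) :
    (-1 : ℚ) ^ (n - i - 1) = (-1) ^ (n - 1) * (-1) ^ i := by
  rw [show n - 1 = (n - i - 1) + i by omega, pow_add, mul_assoc, ← pow_add, ← two_mul, pow_mul]
  norm_num

theorem sum_eq_product (n : ℕ) (hn : 1 ≤ n) :
    ∑ i ∈ Finset.range n,
      ((-1 : ℚ)^(n - i - 1) / (2*(n:ℚ) - 2*(i:ℚ) - 1)) *
        (shifted (2*(n:ℚ) - (i:ℚ)) (2*i) / (Nat.factorial i : ℚ)^2)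
    = 3^(n-1) * (∏ i ∈ Finset.range (n-1), (6*((i:ℚ)+1) - 1) * (6*((i:ℚ)+1) + 1)) /
        (∏ i ∈ Finset.range n, (2*(i:ℚ) + 1))^2 := by
  have hterm : ∀ i ∈ range n, ((-1 : ℚ)^(n - i - 1) / (2*(n:ℚ) - 2*(i:ℚ) - 1)) *
      (shifted (2*(n:ℚ) - (i:ℚ)) (2*i) / (Nat.factorial i : ℚ)^2) = (-1) ^ (n - 1) * summand n i := by
    intro i hi
    rw [neg_one_pow_sub_sub_one (mem_range.1 hi), summand, _root_.div_mul_div_comm]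
    ring
  rw [sum_congr rfl hterm, ← mul_sum, sum_summand_eq hn, ← mul_assoc, ← mul_pow]
  norm_num [closedForm]
end

section
/- Let n and e be integers with n ≥ 1 and 0 ≤ e ≤ n−1. Then Σ_{i=0}^{n−1} ((−1)^{n−i−1}/(2n−2i−1)) · (n−e−i)_{2i}/(i!)^2 = (−1)^n · (1/2+n)_{n−e−1} / ( 2 · (1/2−n)_{n−e} ). -/
open Finset Polynomial Lagrange
open scoped Nat

theorem Lagrange.eval_div_eval_nodal {F ι : Type*} [Field F] [DecidableEq ι] {s : Finset ι}
    {v : ι → F} (hvs : Set.InjOn v s) {p : F[X]} (hp : p.degree < #s) {x : F}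
    (hx : ∀ i ∈ s, x ≠ v i) :
    p.eval x / (nodal s v).eval x = ∑ i ∈ s, nodalWeight s v i * p.eval (v i) / (x - v i) := by
  conv_lhs => rw [eq_interpolate hvs hp, eval_interpolate_not_at_node _ hx,
    mul_div_cancel_left₀ _ (eval_nodal_not_at_node hx)]
  exact sum_congr rfl fun i _ ↦ by ring

theorem prod_erase_range_natCast_sub {R : Type*} [CommRing R] {i M : ℕ} (hi : i ≤ M) :
    ∏ j ∈ (range (M + 1)).erase i, ((i : R) - j) = (-1) ^ (M - i) * i ! * (M - i)! := by
  induction M, hi using Nat.le_induction with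
  | base =>
    rw [range_add_one, erase_insert notMem_range_self, ← descPochhammer_eval_eq_prod_range,
      descPochhammer_eval_eq_descFactorial, Nat.descFactorial_self]
    simp
  | succ M hiM ih =>
    rw [range_add_one, erase_insert_of_ne (by omega), prod_insert (by simp), ih,
      show M + 1 - i = M - i + 1 by omega, Nat.factorial_succ]
    push_cast [Nat.cast_sub hiM]
    ring

theorem nodalWeight_range_natCast {F : Type*} [Field F] {i M : ℕ} (hi : i ≤ M) :
    nodalWeight (range (M + 1)) (Nat.cast : ℕ → F) i = (-1) ^ (M - i) / (i ! * (M - i)!) := by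
  rw [nodalWeight, prod_inv_distrib, prod_erase_range_natCast_sub hi, mul_assoc, mul_inv,
    ← inv_pow, inv_neg_one, div_eq_mul_inv]

theorem sum_range_div_sub_natCast {F : Type*} [Field F] [CharZero F] (M : ℕ) {z : F}
    (hz : ∀ j ≤ M, z ≠ j) :
    ∑ i ∈ range (M + 1), (-1) ^ (M - i) * (M + i)! / (i ! ^ 2 * (M - i)!) / (z - i) =
      (ascPochhammer F M).eval (z + 1) / (descPochhammer F (M + 1)).eval z := by
  have hdeg : ((ascPochhammer F M).comp (X + 1)).degree < #(range (M + 1)) := by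
    rw [card_range]
    refine degree_le_natDegree.trans_lt ?_
    rw [natDegree_comp, ascPochhammer_natDegree, ← C_1, natDegree_X_add_C, mul_one]
    exact_mod_cast M.lt_succ_self
  have h := Lagrange.eval_div_eval_nodal Nat.cast_injective.injOn hdeg (x := z)
    fun j hj ↦ hz j (by simpa [Nat.lt_succ_iff] using hj)
  rw [eval_nodal, ← descPochhammer_eval_eq_prod_range] at h
  simp only [eval_comp, eval_add, eval_X, eval_one] at h
  rw [h]
  refine sum_congr rfl fun i hi ↦ ?_
  rw [nodalWeight_range_natCast (by simpa [Nat.lt_succ_iff] using hi), ← add_comm i M,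
    ← factorial_mul_ascPochhammer F i M]
  have : (i ! : F) ≠ 0 := by exact_mod_cast i.factorial_ne_zero
  field_simp

theorem natCast_sub_half_ne_natCast {F : Type*} [Field F] [CharZero F] (n j : ℕ) :
    (n : F) - 1 / 2 ≠ j := by
  intro h
  have : ((2 * n : ℕ) : F) = (2 * j + 1 : ℕ) := by
    push_cast
    linear_combination (2 : F) * h
  have := Nat.cast_injective this
  omega

theorem shifted_eq_eval_ascPochhammer (a : ℚ) (k : ℕ) :
    shifted a k = (ascPochhammer ℚ k).eval a := by
  induction k with
  | zero => simp [shifted]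
  | succ k ih => rw [shifted, prod_range_succ, ← shifted, ih, ascPochhammer_succ_eval]

theorem summand_eq_zero_of_lt {n e M i : ℕ} (hM : n = e + M + 1) (hi : M < i) :
    (-1 : ℚ) ^ (n - i - 1) / (2 * n - 2 * i - 1) *
      (shifted ((n : ℚ) - e - i) (2 * i) / (i ! : ℚ) ^ 2) = 0 := by
  rw [shifted_eq_eval_ascPochhammer, show (n : ℚ) - e - i = -((i - (M + 1) : ℕ) : ℚ) by
    push_cast [hM, Nat.cast_sub hi]; ring, ascPochhammer_eval_neg_coe_nat_of_lt (by omega)]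
  simp

theorem summand_eq_of_le {n e M i : ℕ} (hM : n = e + M + 1) (hi : i ≤ M) :
    (-1 : ℚ) ^ (n - i - 1) / (2 * n - 2 * i - 1) *
      (shifted ((n : ℚ) - e - i) (2 * i) / (i ! : ℚ) ^ 2) =
      (-1) ^ e / 2 * ((-1) ^ (M - i) * (M + i)! / (i ! ^ 2 * (M - i)!) / ((n - 1 / 2) - i)) := by
  have hfac := factorial_mul_ascPochhammer ℚ (M - i) (2 * i)
  rw [show M - i + 2 * i = M + i by omega] at hfac
  rw [shifted_eq_eval_ascPochhammer, show (n : ℚ) - e - i = ((M - i : ℕ) : ℚ) + 1 by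
      push_cast [hM, Nat.cast_sub hi]; ring, ← hfac, show n - i - 1 = e + (M - i) by omega,
    pow_add, show (2 : ℚ) * n - 2 * i - 1 = 2 * ((n - 1 / 2) - i) by ring]
  have : (n : ℚ) - 1 / 2 - i ≠ 0 := sub_ne_zero.mpr (natCast_sub_half_ne_natCast n i)
  have : ((M - i)! : ℚ) ≠ 0 := by exact_mod_cast (M - i).factorial_ne_zero
  field_simp

theorem sum_eval_at_negative_integers (n e : ℕ) (hn : 1 ≤ n) (he : e ≤ n - 1) :
    ∑ i ∈ Finset.range n,
      ((-1 : ℚ)^(n - i - 1) / (2*(n:ℚ) - 2*(i:ℚ) - 1)) *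
        (shifted ((n:ℚ) - (e:ℚ) - (i:ℚ)) (2*i) / (Nat.factorial i : ℚ)^2)
    = (-1 : ℚ)^n * shifted (1/2 + (n:ℚ)) (n - e - 1) / (2 * shifted (1/2 - (n:ℚ)) (n - e)) := by
  obtain ⟨M, hM⟩ : ∃ M, n = e + M + 1 := ⟨n - e - 1, by omega⟩
  rw [← sum_subset (range_subset_range.mpr (show M + 1 ≤ n by omega))
      fun i _ hi ↦ summand_eq_zero_of_lt hM (by simpa using hi),
    sum_congr rfl fun i hi ↦ summand_eq_of_le hM (by simpa [Nat.lt_succ_iff] using hi),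
    ← mul_sum, sum_range_div_sub_natCast M fun j _ ↦ natCast_sub_half_ne_natCast n j,
    shifted_eq_eval_ascPochhammer, shifted_eq_eval_ascPochhammer,
    show n - e - 1 = M by omega, show n - e = M + 1 by omega,
    show 1 / 2 + (n : ℚ) = (n - 1 / 2) + 1 by ring, show 1 / 2 - (n : ℚ) = -(n - 1 / 2) by ring,
    ascPochhammer_eval_neg_eq_descPochhammer, hM, add_assoc e M 1, pow_add]
  field_simp
end
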